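/- Let F : ℍ⁺ → ℍ⁺ be the holomorphic self-map F(w) = w + 1 of the upper half-plane, and define f_0(w) = i + e^{2πiw}, f_ν = F for ν ≥ 1. Then f_0 maps ℍ⁺ into ℍ⁺, f_ν → F uniformly, yet the right iterated function system satisfies R_ν = f_0 for all ν, hence {R_ν} is not compactly divergent. -/

import Mathlib

/-!
`f 0` factors through `w ↦ e^{2πiw}`, which is `1`-periodic, so `f 0 ∘ F = f 0` and every
`R_ν` collapses to `f 0`. A sequence of maps that is constant at one point `i` of `ℍ⁺`, with
value in `ℍ⁺`, is not compactly divergent: take `K = {i}` and `L = {f 0 i}`. Finally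
`|e^{2πiw}| < 1` on `ℍ⁺`, so `Im (i + e^{2πiw}) > 0`.
-/

open Filter Topology Complex

/-- Right iterated function system: `RFS f ν = f 0 ∘ f 1 ∘ ⋯ ∘ f ν`. -/
def RFS (f : ℕ → ℂ → ℂ) : ℕ → ℂ → ℂ
  | 0 => f 0
  | n + 1 => RFS f n ∘ f (n + 1)

open scoped Real

theorem RFS_eq_of_comp_eq {f : ℕ → ℂ → ℂ} (h : ∀ ν, 1 ≤ ν → f 0 ∘ f ν = f 0) :
    ∀ ν, RFS f ν = f 0
  | 0 => rfl
  | n + 1 => by rw [RFS, RFS_eq_of_comp_eq h n, h (n + 1) n.succ_pos]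

theorem exp_two_pi_I_mul_add_one (w : ℂ) : exp (2 * π * I * (w + 1)) = exp (2 * π * I * w) := by
  rw [mul_add, mul_one, exp_periodic]

theorem im_I_add_exp_two_pi_I_mul_pos {w : ℂ} (hw : 0 < w.im) :
    0 < (I + exp (2 * π * I * w)).im := by
  have hnorm : ‖exp (2 * π * I * w)‖ < 1 := UpperHalfPlane.norm_exp_two_pi_I_lt_one ⟨w, hw⟩
  have him : |(exp (2 * π * I * w)).im| < 1 := (abs_im_le_norm _).trans_lt hnorm
  rw [add_im, I_im]
  linarith [(abs_lt.mp him).1]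

def IsCompactlyDivergent {X : Type*} [TopologicalSpace X] (H : Set X) (g : ℕ → X → X) : Prop :=
  ∀ K L : Set X, K ⊆ H → L ⊆ H → IsCompact K → IsCompact L →
    ∀ᶠ ν in atTop, Disjoint (g ν '' K) L

theorem not_isCompactlyDivergent_of_forall_apply_eq {X : Type*} [TopologicalSpace X]
    {H : Set X} {g : ℕ → X → X} {z y : X} (hz : z ∈ H) (hy : y ∈ H) (hg : ∀ ν, g ν z = y) :
    ¬ IsCompactlyDivergent H g := by
  intro hdiv
  obtain ⟨ν, hν⟩ := (hdiv {z} {y} (Set.singleton_subset_iff.mpr hz)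
    (Set.singleton_subset_iff.mpr hy) isCompact_singleton isCompact_singleton).exists
  exact Set.disjoint_left.mp hν ⟨z, rfl, hg ν⟩ rfl

/-- With `F(w) = w + 1` on the upper half-plane, `f 0 (w) = i + e^{2πiw}` and `f ν = F`
for `ν ≥ 1`, the map `f 0` sends the upper half-plane into itself, `R_ν = f 0` for all
`ν`, and the right iterated function system is not compactly divergent. -/
theorem stmt7 (H : Set ℂ) (hH : H = {w : ℂ | 0 < w.im})
    (F : ℂ → ℂ) (hF : ∀ w, F w = w + 1)
    (f : ℕ → ℂ → ℂ) (hf0 : ∀ w, f 0 w = I + Complex.exp (2 * Real.pi * I * w))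
    (hfν : ∀ ν, 1 ≤ ν → f ν = F) :
    (∀ w ∈ H, f 0 w ∈ H) ∧ (∀ ν, ∀ w, RFS f ν w = f 0 w) ∧
      ¬ (∀ K L : Set ℂ, K ⊆ H → L ⊆ H → IsCompact K → IsCompact L →
          ∀ᶠ ν in atTop, Disjoint (RFS f ν '' K) L) := by
  subst hH
  have hmaps : ∀ w ∈ {w : ℂ | 0 < w.im}, f 0 w ∈ {w : ℂ | 0 < w.im} := fun w hw => by
    show 0 < (f 0 w).im
    rw [hf0]
    exact im_I_add_exp_two_pi_I_mul_pos hw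
  have hR : ∀ ν, RFS f ν = f 0 := RFS_eq_of_comp_eq fun ν hν => by
    ext w
    simp only [Function.comp_apply, hfν ν hν, hF, hf0, exp_two_pi_I_mul_add_one]
  refine ⟨hmaps, fun ν w => by rw [hR], ?_⟩
  exact not_isCompactlyDivergent_of_forall_apply_eq (z := I) (by simp) (hmaps I (by simp))
    fun ν => by rw [hR]
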